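/- arXiv:0808.3656 — 4 statements merged into one kernel-verified Lean document; each statement's English description precedes it below -/
import Mathlib

section
/- Let X be a right-continuous supermartingale with respect to a filtration F, indexed by [0, T], and let Y be an adapted right-continuous process with X_t ≥ Y_t a.s. for every t. If Z is another right-continuous supermartingale dominating Y, and X has the property that X_t equals the essential supremum over stopping times τ ∈ [t, T] of E[Y_τ | F_t], then X_t ≤ Z_t a.s. for every t; i.e., the Snell envelope is the smallest right-continuous supermartingale dominating Y. -/
/-!
Let `τ` be a stopping time with values in `[t, T]`. Rounding `τ` up to the grid `t + δℕ` gives a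
bounded discrete stopping time, so discrete optional sampling for `Z` yields
`∫_A Y_{τ_δ} ≤ ∫_A Z_{τ_δ} ≤ ∫_A Z_t` for every `A ∈ ℱ_t`. As `δ → 0`, `τ_δ ↓ τ`, so by
right-continuity and boundedness of `Y` and dominated convergence `∫_A Y_τ ≤ ∫_A Z_t`, i.e.
`E[Y_τ | ℱ_t] ≤ Z_t`. Thus `Z_t` bounds the family whose essential supremum is `X_t`.
-/

open MeasureTheory Filter Topology

namespace MeasureTheory

variable {Ω : Type*} {m0 : MeasurableSpace Ω} {μ : Measure Ω}

theorem condExp_le_of_forall_setIntegral_le {m : MeasurableSpace Ω} (hm : m ≤ m0)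
    [IsFiniteMeasure μ] {f g : Ω → ℝ} (hf : Integrable f μ) (hg : Integrable g μ)
    (hgm : StronglyMeasurable[m] g)
    (h : ∀ s, MeasurableSet[m] s → ∫ ω in s, f ω ∂μ ≤ ∫ ω in s, g ω ∂μ) :
    μ[f|m] ≤ᵐ[μ] g := by
  have : IsFiniteMeasure (μ.trim hm) := isFiniteMeasure_trim hm
  refine ae_le_of_ae_le_trim (hm := hm) ?_
  refine ae_le_of_forall_setIntegral_le (μ := μ.trim hm)
    (integrable_condExp.trim hm stronglyMeasurable_condExp) (hg.trim hm hgm) fun s hs _ => ?_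
  rw [← setIntegral_trim hm stronglyMeasurable_condExp hs, ← setIntegral_trim hm hgm hs,
    setIntegral_condExp hm hf hs]
  exact h s hs

def Filtration.reindex {ι κ : Type*} [Preorder ι] [Preorder κ] (ℱ : Filtration ι m0)
    {g : κ → ι} (hg : Monotone g) : Filtration κ m0 where
  seq k := ℱ (g k)
  mono' _ _ hij := ℱ.mono (hg hij)
  le' k := ℱ.le (g k)

@[simp]
theorem Filtration.reindex_apply {ι κ : Type*} [Preorder ι] [Preorder κ] (ℱ : Filtration ι m0)
    {g : κ → ι} (hg : Monotone g) (k : κ) : ℱ.reindex hg k = ℱ (g k) :=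
  rfl

section Supermartingale

variable {ι κ : Type*} [Preorder ι] [Preorder κ] {ℱ : Filtration ι m0} {f : ι → Ω → ℝ}

theorem Supermartingale.reindex (hf : Supermartingale f ℱ μ) {g : κ → ι} (hg : Monotone g) :
    Supermartingale (fun k => f (g k)) (ℱ.reindex hg) μ :=
  ⟨fun k => hf.stronglyAdapted (g k), fun _ _ hij => hf.condExp_ae_le (hg hij),
    fun k => hf.integrable (g k)⟩

theorem Supermartingale.indicator (hf : Supermartingale f ℱ μ) {s : Set Ω}
    (hs : ∀ i, MeasurableSet[ℱ i] s) : Supermartingale (fun i => s.indicator (f i)) ℱ μ :=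
  ⟨fun i => (hf.stronglyAdapted i).indicator (hs i),
    fun i _ hij => (condExp_indicator (hf.integrable _) (hs i)).trans_le <|
      (hf.condExp_ae_le hij).mono fun _ h => Set.indicator_le_indicator h,
    fun i => (hf.integrable i).indicator (ℱ.le i s (hs i))⟩

end Supermartingale

theorem Supermartingale.setIntegral_stoppedValue_le [IsFiniteMeasure μ] {𝒢 : Filtration ℕ m0}
    {f : ℕ → Ω → ℝ} (hf : Supermartingale f 𝒢 μ) {σ : Ω → ℕ∞} (hσ : IsStoppingTime 𝒢 σ)
    {N : ℕ} (hσN : ∀ ω, σ ω ≤ N) {s : Set Ω} (hs : MeasurableSet[𝒢 0] s) :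
    ∫ ω in s, stoppedValue f σ ω ∂μ ≤ ∫ ω in s, f 0 ω ∂μ := by
  have hs' : ∀ i, MeasurableSet[𝒢 i] s := fun i => 𝒢.mono (Nat.zero_le i) s hs
  have := (hf.indicator hs').neg.expected_stoppedValue_mono (isStoppingTime_const 𝒢 0) hσ
    (fun _ => bot_le) hσN
  rw [← integral_indicator (𝒢.le 0 s hs), ← integral_indicator (𝒢.le 0 s hs)]
  simpa [stoppedValue, integral_neg, Set.indicator] using this

section Grid

variable {t δ : ℝ}

theorem monotone_add_natCast_mul (t : ℝ) (hδ : 0 ≤ δ) : Monotone fun k : ℕ => t + k * δ :=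
  fun _ _ hij => by dsimp only; gcongr

theorem le_add_ceil_div_mul (x : ℝ) (hδ : 0 < δ) : x ≤ t + ⌈(x - t) / δ⌉₊ * δ := by
  have := (div_le_iff₀ hδ).1 (Nat.le_ceil ((x - t) / δ))
  linarith

theorem add_ceil_div_mul_le {x : ℝ} (hx : t ≤ x) (hδ : 0 < δ) :
    t + ⌈(x - t) / δ⌉₊ * δ ≤ x + δ := by
  have h := (Nat.ceil_lt_add_one (div_nonneg (sub_nonneg.2 hx) hδ.le)).le
  rw [← sub_le_iff_le_add, le_div_iff₀ hδ] at h
  nlinarith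

theorem ceil_div_le_ceil_div {x y : ℝ} (hxy : x ≤ y) (hδ : 0 < δ) :
    ⌈(x - t) / δ⌉₊ ≤ ⌈(y - t) / δ⌉₊ :=
  Nat.ceil_mono (div_le_div_of_nonneg_right (sub_le_sub_right hxy t) hδ.le)

theorem tendsto_add_ceil_div_mul {x : ℝ} (hx : t ≤ x) {δ : ℕ → ℝ} (hδpos : ∀ n, 0 < δ n)
    (hδ : Tendsto δ atTop (𝓝 0)) :
    Tendsto (fun n => t + ⌈(x - t) / δ n⌉₊ * δ n) atTop (𝓝[≥] x) := by
  refine tendsto_nhdsWithin_iff.2 ⟨?_, .of_forall fun n => le_add_ceil_div_mul x (hδpos n)⟩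
  refine tendsto_of_tendsto_of_tendsto_of_le_of_le tendsto_const_nhds ?_
    (fun n => le_add_ceil_div_mul x (hδpos n)) (fun n => add_ceil_div_mul_le hx (hδpos n))
  simpa using tendsto_const_nhds.add hδ

variable {ℱ : Filtration ℝ m0} {τ : Ω → ℝ}

theorem IsStoppingTime.ceil_div (hτ : IsStoppingTime ℱ fun ω => (τ ω : WithTop ℝ)) (t : ℝ)
    (hδ : 0 < δ) :
    IsStoppingTime (ℱ.reindex (monotone_add_natCast_mul t hδ.le))
      fun ω => ((⌈(τ ω - t) / δ⌉₊ : ℕ) : WithTop ℕ) := by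
  intro k
  convert hτ (t + k * δ) using 3 with ω
  · rfl
  · simp only [WithTop.coe_le_coe]
    -- the level `k` enters through `WithTop.some`, the stopping time through `Nat.cast`
    rw [← WithTop.coe_natCast, Nat.cast_id, WithTop.coe_le_coe, Nat.ceil_le, div_le_iff₀ hδ,
      sub_le_iff_le_add']

variable {T : ℝ}

theorem Adapted.stronglyMeasurable_comp_add_ceil_div_mul {Y : ℝ → Ω → ℝ} (hY : Adapted ℱ Y)
    (hτ : IsStoppingTime ℱ fun ω => (τ ω : WithTop ℝ)) (hτT : ∀ ω, τ ω ≤ T) (t : ℝ)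
    (hδ : 0 < δ) : StronglyMeasurable fun ω => Y (t + ⌈(τ ω - t) / δ⌉₊ * δ) ω := by
  have hYgrid : StronglyAdapted (ℱ.reindex (monotone_add_natCast_mul t hδ.le))
      fun k : ℕ => Y (t + k * δ) := fun k => (hY _).stronglyMeasurable
  exact (stronglyMeasurable_stoppedValue_of_le hYgrid.isStronglyProgressive_of_discrete
    (hτ.ceil_div t hδ) fun ω => Nat.cast_le.2 (ceil_div_le_ceil_div (hτT ω) hδ)).mono
    (Filtration.le _ _)

theorem Supermartingale.setIntegral_comp_add_ceil_div_mul_le [IsFiniteMeasure μ]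
    {Y Z : ℝ → Ω → ℝ} (hZ : Supermartingale Z ℱ μ) (hYZ : ∀ t ω, Y t ω ≤ Z t ω)
    (hτ : IsStoppingTime ℱ fun ω => (τ ω : WithTop ℝ)) (hτT : ∀ ω, τ ω ≤ T) (hδ : 0 < δ)
    {s : Set Ω} (hs : MeasurableSet[ℱ t] s)
    (hYs : IntegrableOn (fun ω => Y (t + ⌈(τ ω - t) / δ⌉₊ * δ) ω) s μ) :
    ∫ ω in s, Y (t + ⌈(τ ω - t) / δ⌉₊ * δ) ω ∂μ ≤ ∫ ω in s, Z t ω ∂μ := by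
  have hZgrid := hZ.reindex (monotone_add_natCast_mul t hδ.le)
  have hσ := hτ.ceil_div t hδ
  have hσN : ∀ ω, ((⌈(τ ω - t) / δ⌉₊ : ℕ) : WithTop ℕ) ≤ (⌈(T - t) / δ⌉₊ : ℕ) :=
    fun ω => Nat.cast_le.2 (ceil_div_le_ceil_div (hτT ω) hδ)
  calc ∫ ω in s, Y (t + ⌈(τ ω - t) / δ⌉₊ * δ) ω ∂μ
      ≤ ∫ ω in s, stoppedValue (fun k : ℕ => Z (t + k * δ)) (fun ω => ⌈(τ ω - t) / δ⌉₊) ω ∂μ :=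
        setIntegral_mono_on hYs (integrable_stoppedValue ℕ hσ hZgrid.integrable hσN).integrableOn
          (ℱ.le t s hs) fun ω _ => hYZ _ ω
    _ ≤ ∫ ω in s, Z (t + (0 : ℕ) * δ) ω ∂μ :=
        hZgrid.setIntegral_stoppedValue_le hσ hσN
          (by rwa [Filtration.reindex_apply, Nat.cast_zero, zero_mul, add_zero])
    _ = ∫ ω in s, Z t ω ∂μ := by simp

end Grid

section RightContinuous

variable {ℱ : Filtration ℝ m0} {τ : Ω → ℝ} {t T C : ℝ} {Y Z : ℝ → Ω → ℝ}

theorem tendsto_comp_add_ceil_div_mul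
    (hYrc : ∀ ω t, ContinuousWithinAt (fun s => Y s ω) (Set.Ici t) t) (ω : Ω) (hτt : t ≤ τ ω) :
    Tendsto (fun n : ℕ => Y (t + ⌈(τ ω - t) / (1 / (n + 1))⌉₊ * (1 / (n + 1))) ω) atTop
      (𝓝 (stoppedValue Y (fun ω => (τ ω : WithTop ℝ)) ω)) :=
  (hYrc ω (τ ω)).tendsto.comp <| tendsto_add_ceil_div_mul hτt (fun _ => Nat.one_div_pos_of_nat)
    tendsto_one_div_add_atTop_nhds_zero_nat

theorem Adapted.stronglyMeasurable_stoppedValue_of_continuousWithinAt (hY : Adapted ℱ Y)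
    (hYrc : ∀ ω t, ContinuousWithinAt (fun s => Y s ω) (Set.Ici t) t)
    (hτ : IsStoppingTime ℱ fun ω => (τ ω : WithTop ℝ)) (hτt : ∀ ω, τ ω ∈ Set.Icc t T) :
    StronglyMeasurable (stoppedValue Y fun ω => (τ ω : WithTop ℝ)) :=
  stronglyMeasurable_of_tendsto atTop
    (fun _ => hY.stronglyMeasurable_comp_add_ceil_div_mul hτ (fun ω => (hτt ω).2) t
      Nat.one_div_pos_of_nat)
    (tendsto_pi_nhds.2 fun ω => tendsto_comp_add_ceil_div_mul hYrc ω (hτt ω).1)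

theorem setIntegral_stoppedValue_le_of_le_supermartingale [IsFiniteMeasure μ] (hY : Adapted ℱ Y)
    (hYrc : ∀ ω t, ContinuousWithinAt (fun s => Y s ω) (Set.Ici t) t)
    (hYbdd : ∀ t ω, |Y t ω| ≤ C) (hZ : Supermartingale Z ℱ μ) (hYZ : ∀ t ω, Y t ω ≤ Z t ω)
    (hτ : IsStoppingTime ℱ fun ω => (τ ω : WithTop ℝ)) (hτt : ∀ ω, τ ω ∈ Set.Icc t T)
    {s : Set Ω} (hs : MeasurableSet[ℱ t] s) :
    ∫ ω in s, stoppedValue Y (fun ω => (τ ω : WithTop ℝ)) ω ∂μ ≤ ∫ ω in s, Z t ω ∂μ := by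
  have hδ : ∀ n : ℕ, (0 : ℝ) < 1 / (n + 1) := fun _ => Nat.one_div_pos_of_nat
  have hgrid (n : ℕ) :=
    hY.stronglyMeasurable_comp_add_ceil_div_mul hτ (fun ω => (hτt ω).2) t (hδ n)
  have hlim := tendsto_integral_of_dominated_convergence (μ := μ.restrict s) (fun _ => C)
    (fun n => (hgrid n).aestronglyMeasurable) (integrable_const C)
    (fun n => ae_of_all _ fun ω => hYbdd _ ω)
    (ae_of_all _ fun ω => tendsto_comp_add_ceil_div_mul hYrc ω (hτt ω).1)
  refine le_of_tendsto hlim (.of_forall fun n => ?_)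
  have hint := Integrable.of_bound (μ := μ) (hgrid n).aestronglyMeasurable C
    (ae_of_all _ fun ω => hYbdd _ ω)
  exact hZ.setIntegral_comp_add_ceil_div_mul_le hYZ hτ (fun ω => (hτt ω).2) (hδ n) hs
    hint.integrableOn

theorem condExp_stoppedValue_le_of_le_supermartingale [IsFiniteMeasure μ] (hY : Adapted ℱ Y)
    (hYrc : ∀ ω t, ContinuousWithinAt (fun s => Y s ω) (Set.Ici t) t)
    (hYbdd : ∀ t ω, |Y t ω| ≤ C) (hZ : Supermartingale Z ℱ μ) (hYZ : ∀ t ω, Y t ω ≤ Z t ω)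
    (hτ : IsStoppingTime ℱ fun ω => (τ ω : WithTop ℝ)) (hτt : ∀ ω, τ ω ∈ Set.Icc t T) :
    μ[stoppedValue Y (fun ω => (τ ω : WithTop ℝ))|ℱ t] ≤ᵐ[μ] Z t :=
  condExp_le_of_forall_setIntegral_le (ℱ.le t)
    (Integrable.of_bound
      (hY.stronglyMeasurable_stoppedValue_of_continuousWithinAt hYrc hτ hτt).aestronglyMeasurable C
      (ae_of_all _ fun ω => hYbdd _ ω))
    (hZ.integrable t) (hZ.stronglyAdapted t)
    fun _ hs => setIntegral_stoppedValue_le_of_le_supermartingale hY hYrc hYbdd hZ hYZ hτ hτt hs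

end RightContinuous

end MeasureTheory

theorem snell_envelope_smallest_supermartingale_general
    {Ω : Type*} {m0 : MeasurableSpace Ω} {P : Measure Ω} [IsProbabilityMeasure P]
    (ℱ : Filtration ℝ m0) (T : ℝ)
    (Y X Z : ℝ → Ω → ℝ)
    (hYadp : Adapted ℱ Y)
    (hYrc : ∀ ω t, ContinuousWithinAt (fun s => Y s ω) (Set.Ici t) t)
    (C : ℝ) (hYbdd : ∀ t ω, |Y t ω| ≤ C)
    -- and it is the least such upper bound (essential supremum property):
    (hXleast : ∀ t ∈ Set.Icc (0:ℝ) T, ∀ U : Ω → ℝ, AEMeasurable U P →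
      (∀ τ : Ω → ℝ, IsStoppingTime ℱ (fun ω => (τ ω : WithTop ℝ)) → (∀ ω, τ ω ∈ Set.Icc t T) →
        P[stoppedValue Y (fun ω => (τ ω : WithTop ℝ))|ℱ t] ≤ᵐ[P] U) → X t ≤ᵐ[P] U)
    (hZsuper : Supermartingale Z ℱ P)
    (hZdom : ∀ t ω, Y t ω ≤ Z t ω) :
    ∀ t ∈ Set.Icc (0:ℝ) T, X t ≤ᵐ[P] Z t :=
  fun t ht => hXleast t ht (Z t) ((hZsuper.stronglyAdapted t).mono (ℱ.le t)).measurable.aemeasurable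
    fun _ hτ hτt =>
      condExp_stoppedValue_le_of_le_supermartingale hYadp hYrc hYbdd hZsuper hZdom hτ hτt

/-- The Snell envelope `X` of a bounded right-continuous adapted process `Y`
(i.e. `X t = ess sup over stopping times τ ∈ [t,T] of E[Y_τ | F_t]`) is the
smallest right-continuous supermartingale dominating `Y`: any right-continuous
supermartingale `Z` with `Z ≥ Y` satisfies `X t ≤ Z t` a.s. for every `t ∈ [0,T]`. -/
theorem snell_envelope_smallest_supermartingale
    {Ω : Type*} {m0 : MeasurableSpace Ω} {P : Measure Ω} [IsProbabilityMeasure P]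
    (ℱ : Filtration ℝ m0) (T : ℝ) (hT : 0 ≤ T)
    (Y X Z : ℝ → Ω → ℝ)
    (hYadp : Adapted ℱ Y)
    (hYrc : ∀ ω t, ContinuousWithinAt (fun s => Y s ω) (Set.Ici t) t)
    (C : ℝ) (hYbdd : ∀ t ω, |Y t ω| ≤ C)
    (hXsuper : Supermartingale X ℱ P)
    (hXrc : ∀ ω t, ContinuousWithinAt (fun s => X s ω) (Set.Ici t) t)
    (hXdom : ∀ t, ∀ᵐ ω ∂P, Y t ω ≤ X t ω)
    -- `X t` is an a.s. upper bound for the conditional payoffs: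
    (hXub : ∀ t ∈ Set.Icc (0:ℝ) T, ∀ τ : Ω → ℝ, IsStoppingTime ℱ (fun ω => (τ ω : WithTop ℝ)) →
      (∀ ω, τ ω ∈ Set.Icc t T) → P[stoppedValue Y (fun ω => (τ ω : WithTop ℝ))|ℱ t] ≤ᵐ[P] X t)
    -- and it is the least such upper bound (essential supremum property):
    (hXleast : ∀ t ∈ Set.Icc (0:ℝ) T, ∀ U : Ω → ℝ, AEMeasurable U P →
      (∀ τ : Ω → ℝ, IsStoppingTime ℱ (fun ω => (τ ω : WithTop ℝ)) → (∀ ω, τ ω ∈ Set.Icc t T) →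
        P[stoppedValue Y (fun ω => (τ ω : WithTop ℝ))|ℱ t] ≤ᵐ[P] U) → X t ≤ᵐ[P] U)
    (hZsuper : Supermartingale Z ℱ P)
    (hZrc : ∀ ω t, ContinuousWithinAt (fun s => Z s ω) (Set.Ici t) t)
    (hZdom : ∀ t ω, Y t ω ≤ Z t ω) :
    ∀ t ∈ Set.Icc (0:ℝ) T, X t ≤ᵐ[P] Z t :=
  snell_envelope_smallest_supermartingale_general ℱ T Y X Z hYadp hYrc C hYbdd hXleast hZsuper hZdom
end

section
/- For stopping times t ≤ θ, suppose for every admissible control u the conditional expectation under P^u of [V(θ) + ∫_t^θ h_s^u ds | F_t] is at least V(t) whenever θ ≤ ϱ_t (the first time after t that V equals the stopping reward), and that V(ϱ_t) equals the stopping reward g(X(ϱ_t)) a.s. Then V(t) = ess inf over u of E^u[ g(X(ϱ_t)) + ∫_t^{ϱ_t} h_s^u ds | F_t ] a.s. -/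
open MeasureTheory Filter

/-!
Taking `θ = ϱ` in the submartingale inequality and replacing `V(ϱ)` by `g(X(ϱ))` shows that
`V(t)` lies below every conditional reward at `ϱ`. Conversely `ϱ` is itself an admissible
stopping rule, so each conditional reward at `ϱ` lies below `Zs u`; a lower bound of the
rewards at `ϱ` is therefore a lower bound of all `Zs u`, hence below `V(t)`. The measures
`P^u` and `P` are equivalent, so a.s. statements pass freely between them.
-/

theorem value_process_identification_at_first_meeting_time_general
    {Ω : Type*} {m0 : MeasurableSpace Ω} (P : Measure Ω)
    (ℱ : Filtration ℝ m0) (T : ℝ)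
    {U : Type*}
    (Pc : U → Measure Ω)
    (hPcequiv : ∀ u, Pc u ≪ P ∧ P ≪ Pc u)
    (h : U → ℝ → Ω → ℝ)
    (n : ℕ) (X : ℝ → Ω → (Fin n → ℝ)) (g : (Fin n → ℝ) → ℝ)
    (V : ℝ → Ω → ℝ)
    (t ϱ : Ω → ℝ) (ht : IsStoppingTime ℱ (fun ω => ((t ω : ℝ) : WithTop ℝ))) (hϱ : IsStoppingTime ℱ (fun ω => ((ϱ ω : ℝ) : WithTop ℝ)))
    (hord : ∀ ω, 0 ≤ t ω ∧ t ω ≤ ϱ ω ∧ ϱ ω ≤ T)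
    -- submartingale inequality up to `ϱ`:
    (hsub : ∀ u, ∀ θ : Ω → ℝ, IsStoppingTime ℱ (fun ω => ((θ ω : ℝ) : WithTop ℝ)) → (∀ ω, t ω ≤ θ ω ∧ θ ω ≤ ϱ ω) →
      stoppedValue V (fun ω => ((t ω : ℝ) : WithTop ℝ)) ≤ᵐ[Pc u]
        (Pc u)[fun ω => stoppedValue V (fun ω => ((θ ω : ℝ) : WithTop ℝ)) ω + ∫ s in Set.Ioc (t ω) (θ ω), h u s ω|ht.measurableSpace])
    -- `V(ϱ) = g(X(ϱ))` a.s.: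
    (hmeet : ∀ᵐ ω ∂P, V (ϱ ω) ω = g (X (ϱ ω) ω))
    -- `V(t)` is the ess inf over `u` of the ess sups `Zs u` over stopping rules `τ ∈ [t,T]`:
    (Zs : U → Ω → ℝ)
    (hZub : ∀ u, ∀ τ : Ω → ℝ, IsStoppingTime ℱ (fun ω => ((τ ω : ℝ) : WithTop ℝ)) → (∀ ω, t ω ≤ τ ω ∧ τ ω ≤ T) →
      (Pc u)[fun ω => g (X (τ ω) ω) + ∫ s in Set.Ioc (t ω) (τ ω), h u s ω|ht.measurableSpace]
        ≤ᵐ[Pc u] Zs u)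
    (hVgreatest : ∀ Y : Ω → ℝ, AEMeasurable Y P → (∀ u, Y ≤ᵐ[P] Zs u) →
      Y ≤ᵐ[P] stoppedValue V (fun ω => ((t ω : ℝ) : WithTop ℝ))) :
    (∀ u, stoppedValue V (fun ω => ((t ω : ℝ) : WithTop ℝ)) ≤ᵐ[P]
      (Pc u)[fun ω => g (X (ϱ ω) ω) + ∫ s in Set.Ioc (t ω) (ϱ ω), h u s ω|ht.measurableSpace]) ∧
    (∀ Y : Ω → ℝ, AEMeasurable Y P →
      (∀ u, Y ≤ᵐ[P]
        (Pc u)[fun ω => g (X (ϱ ω) ω) + ∫ s in Set.Ioc (t ω) (ϱ ω), h u s ω|ht.measurableSpace]) →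
      Y ≤ᵐ[P] stoppedValue V (fun ω => ((t ω : ℝ) : WithTop ℝ))) := by
  refine ⟨fun u => ?_, fun Y hY hYle => hVgreatest Y hY fun u => ?_⟩
  · have hreward_at_ϱ :
        (fun ω => stoppedValue V (fun ω => ((ϱ ω : ℝ) : WithTop ℝ)) ω
            + ∫ s in Set.Ioc (t ω) (ϱ ω), h u s ω)
          =ᵐ[Pc u] fun ω => g (X (ϱ ω) ω) + ∫ s in Set.Ioc (t ω) (ϱ ω), h u s ω := by
      filter_upwards [(hPcequiv u).1.ae_le hmeet] with ω hω
      simp [stoppedValue, hω]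
    have hsub_at_ϱ := hsub u ϱ hϱ fun ω => ⟨(hord ω).2.1, le_rfl⟩
    exact (hPcequiv u).2.ae_le <| hsub_at_ϱ.trans (condExp_congr_ae hreward_at_ϱ).le
  · have hϱ_le_Zs := hZub u ϱ hϱ fun ω => (hord ω).2
    exact (hPcequiv u).2.ae_le <| EventuallyLE.trans ((hPcequiv u).1.ae_le (hYle u)) hϱ_le_Zs

/-- Identification of the value at a stopping time `t` (Proposition 5.4 of
Karatzas–Zamfirescu): if for every admissible control `u` the value process `V`
satisfies the submartingale inequality up to `ϱ_t` (the first time after `t`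
that `V` meets the stopping reward `g(X)`), `V(ϱ_t) = g(X(ϱ_t))` a.s., and
`V(t)` is the essential infimum over `u` of the essential suprema (over stopping
rules `τ ∈ [t,T]`) of the conditional expected rewards, then
`V(t) = ess inf over u of E^u[ g(X(ϱ_t)) + ∫_t^{ϱ_t} h^u_s ds | F_t ]` a.s.,
expressed as: `V(t)` is an a.s. lower bound of that family, and every a.e.
measurable lower bound of the family is a.s. at most `V(t)`. -/
theorem value_process_identification_at_first_meeting_time
    {Ω : Type*} {m0 : MeasurableSpace Ω} (P : Measure Ω) [IsProbabilityMeasure P]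
    (ℱ : Filtration ℝ m0) (T : ℝ) (hT : 0 ≤ T)
    {U : Type*} [Nonempty U]
    (Pc : U → Measure Ω) (hPcprob : ∀ u, IsProbabilityMeasure (Pc u))
    (hPcequiv : ∀ u, Pc u ≪ P ∧ P ≪ Pc u)
    (h : U → ℝ → Ω → ℝ) (K : ℝ) (hhbdd : ∀ u s ω, |h u s ω| ≤ K)
    (n : ℕ) (X : ℝ → Ω → (Fin n → ℝ)) (g : (Fin n → ℝ) → ℝ)
    (V : ℝ → Ω → ℝ) (CV : ℝ) (hVbdd : ∀ s ω, |V s ω| ≤ CV)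
    (hVrc : ∀ ω s, ContinuousWithinAt (fun r => V r ω) (Set.Ici s) s)
    (hVdomg : ∀ s ω, g (X s ω) ≤ V s ω)
    (t ϱ : Ω → ℝ) (ht : IsStoppingTime ℱ (fun ω => ((t ω : ℝ) : WithTop ℝ))) (hϱ : IsStoppingTime ℱ (fun ω => ((ϱ ω : ℝ) : WithTop ℝ)))
    (hord : ∀ ω, 0 ≤ t ω ∧ t ω ≤ ϱ ω ∧ ϱ ω ≤ T)
    -- `ϱ` is the first time after `t` that `V` meets the stopping reward:
    (hϱfirst : ∀ᵐ ω ∂P, ∀ s, t ω ≤ s → s < ϱ ω → g (X s ω) < V s ω)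
    -- submartingale inequality up to `ϱ`:
    (hsub : ∀ u, ∀ θ : Ω → ℝ, IsStoppingTime ℱ (fun ω => ((θ ω : ℝ) : WithTop ℝ)) → (∀ ω, t ω ≤ θ ω ∧ θ ω ≤ ϱ ω) →
      stoppedValue V (fun ω => ((t ω : ℝ) : WithTop ℝ)) ≤ᵐ[Pc u]
        (Pc u)[fun ω => stoppedValue V (fun ω => ((θ ω : ℝ) : WithTop ℝ)) ω + ∫ s in Set.Ioc (t ω) (θ ω), h u s ω|ht.measurableSpace])
    -- `V(ϱ) = g(X(ϱ))` a.s.: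
    (hmeet : ∀ᵐ ω ∂P, V (ϱ ω) ω = g (X (ϱ ω) ω))
    -- `V(t)` is the ess inf over `u` of the ess sups `Zs u` over stopping rules `τ ∈ [t,T]`:
    (Zs : U → Ω → ℝ)
    (hZub : ∀ u, ∀ τ : Ω → ℝ, IsStoppingTime ℱ (fun ω => ((τ ω : ℝ) : WithTop ℝ)) → (∀ ω, t ω ≤ τ ω ∧ τ ω ≤ T) →
      (Pc u)[fun ω => g (X (τ ω) ω) + ∫ s in Set.Ioc (t ω) (τ ω), h u s ω|ht.measurableSpace]
        ≤ᵐ[Pc u] Zs u)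
    (hZleast : ∀ u, ∀ Y : Ω → ℝ, AEMeasurable Y P →
      (∀ τ : Ω → ℝ, IsStoppingTime ℱ (fun ω => ((τ ω : ℝ) : WithTop ℝ)) → (∀ ω, t ω ≤ τ ω ∧ τ ω ≤ T) →
        (Pc u)[fun ω => g (X (τ ω) ω) + ∫ s in Set.Ioc (t ω) (τ ω), h u s ω|ht.measurableSpace]
          ≤ᵐ[Pc u] Y) →
      Zs u ≤ᵐ[Pc u] Y)
    (hVlb : ∀ u, stoppedValue V (fun ω => ((t ω : ℝ) : WithTop ℝ)) ≤ᵐ[P] Zs u)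
    (hVgreatest : ∀ Y : Ω → ℝ, AEMeasurable Y P → (∀ u, Y ≤ᵐ[P] Zs u) →
      Y ≤ᵐ[P] stoppedValue V (fun ω => ((t ω : ℝ) : WithTop ℝ))) :
    (∀ u, stoppedValue V (fun ω => ((t ω : ℝ) : WithTop ℝ)) ≤ᵐ[P]
      (Pc u)[fun ω => g (X (ϱ ω) ω) + ∫ s in Set.Ioc (t ω) (ϱ ω), h u s ω|ht.measurableSpace]) ∧
    (∀ Y : Ω → ℝ, AEMeasurable Y P →
      (∀ u, Y ≤ᵐ[P]
        (Pc u)[fun ω => g (X (ϱ ω) ω) + ∫ s in Set.Ioc (t ω) (ϱ ω), h u s ω|ht.measurableSpace]) →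
      Y ≤ᵐ[P] stoppedValue V (fun ω => ((t ω : ℝ) : WithTop ℝ))) :=
  value_process_identification_at_first_meeting_time_general P ℱ T Pc hPcequiv h n X g V t ϱ ht hϱ
    hord hsub hmeet Zs hZub hVgreatest
end

section
/- (Necessity half of saddle characterization.) If (u*, τ*) is a saddle point of the game, then g(X(τ*)) = V(τ*) a.s., where V(τ*) is the value of the game at time τ*, given that: (a) R^{u*}(·∧ϱ_{τ*}) is a P^{u*}-submartingale (with ϱ_{τ*} the first time after τ* that V meets g(X)); (b) Y^{u*}(τ) ≤ R^{u*}(τ) a.s. for every stopping time τ, with equality at τ = ϱ_{τ*}; and (c) E^{u*}[Y^{u*}(τ)] ≤ E^{u*}[Y^{u*}(τ*)] for all stopping times τ. -/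
open MeasureTheory Filter Topology

/-! Since `Y ≤ R` pathwise, it suffices to show `E[R(τ*)] ≤ E[Y(τ*)]`, and this is the chain
`E[R(τ*)] ≤ E[R(ϱ)] = E[Y(ϱ)] ≤ E[Y(τ*)]` given by the submartingale inequality, the equality at
`ϱ`, and the optimality of `τ*` applied to `τ = ϱ`. The stopped values are integrable because the
processes are bounded, and measurable because a right-continuous process is the pointwise limit of
its values at the grid times `⌈τ (n + 1)⌉ / (n + 1)`, which take countably many values. -/

lemma tendsto_ceil_mul_div_nhdsGE (x : ℝ) :
    Tendsto (fun n : ℕ => (⌈x * (n + 1)⌉ : ℝ) / (n + 1)) atTop (𝓝[≥] x) := by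
  refine tendsto_nhdsWithin_iff.mpr ⟨?_, Eventually.of_forall fun n => ?_⟩
  · have hupper : Tendsto (fun n : ℕ => x + 1 / ((n : ℝ) + 1)) atTop (𝓝 x) := by
      simpa using (tendsto_const_nhds (x := x)).add tendsto_one_div_add_atTop_nhds_zero_nat
    refine tendsto_of_tendsto_of_tendsto_of_le_of_le tendsto_const_nhds hupper
      (fun n => ?_) (fun n => ?_)
    · rw [le_div_iff₀ (by positivity)]
      exact Int.le_ceil _
    · rw [div_le_iff₀ (by positivity), add_mul, one_div_mul_cancel (by positivity)]
      exact (Int.ceil_lt_add_one _).le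
  · rw [Set.mem_Ici, le_div_iff₀ (by positivity)]
    exact Int.le_ceil _

lemma measurable_apply_of_rightContinuous {Ω β : Type*} {mΩ : MeasurableSpace Ω}
    [TopologicalSpace β] [TopologicalSpace.PseudoMetrizableSpace β] [MeasurableSpace β]
    [BorelSpace β] {u : ℝ → Ω → β} (hu : ∀ t, Measurable (u t))
    (hrc : ∀ ω t, ContinuousWithinAt (fun s => u s ω) (Set.Ici t) t)
    {τ : Ω → ℝ} (hτ : Measurable τ) :
    Measurable fun ω => u (τ ω) ω := by
  have hgrid : ∀ n : ℕ, Measurable fun ω => u ((⌈τ ω * (n + 1)⌉ : ℝ) / (n + 1)) ω := fun n =>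
    (measurable_from_prod_countable_left (f := fun p : Ω × ℤ => u ((p.2 : ℝ) / (n + 1)) p.1)
      fun k => hu ((k : ℝ) / (n + 1))).comp (measurable_id.prodMk (Int.measurable_ceil.comp (hτ.mul_const _)))
  exact measurable_of_tendsto_metrizable hgrid <| tendsto_pi_nhds.mpr fun ω =>
    (hrc ω (τ ω)).tendsto.comp (tendsto_ceil_mul_div_nhdsGE (τ ω))

lemma integrable_stoppedValue_of_rightContinuous {Ω : Type*} {m0 : MeasurableSpace Ω}
    {μ : Measure Ω} [IsFiniteMeasure μ] {ℱ : Filtration ℝ m0} {u : ℝ → Ω → ℝ}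
    (hadp : Adapted ℱ u) (hrc : ∀ ω t, ContinuousWithinAt (fun s => u s ω) (Set.Ici t) t)
    {C : ℝ} (hbdd : ∀ t ω, |u t ω| ≤ C)
    {τ : Ω → ℝ} (hτ : IsStoppingTime ℱ (fun ω => (τ ω : WithTop ℝ))) :
    Integrable (stoppedValue u (fun ω => (τ ω : WithTop ℝ))) μ := by
  have hτm : Measurable τ := (hτ.measurable.mono hτ.measurableSpace_le le_rfl).untopA
  have hstopped : Measurable (stoppedValue u (fun ω => (τ ω : WithTop ℝ))) :=
    measurable_apply_of_rightContinuous (fun t => (hadp t).mono (ℱ.le t) le_rfl) hrc hτm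
  exact .of_bound hstopped.aestronglyMeasurable C (ae_of_all _ fun ω => hbdd _ _)

lemma integral_le_of_ae_le_condExp {α : Type*} {m m0 : MeasurableSpace α} {μ : Measure α}
    (hm : m ≤ m0) [SigmaFinite (μ.trim hm)] {f g : α → ℝ} (hf : Integrable f μ)
    (hfg : f ≤ᵐ[μ] μ[g|m]) :
    ∫ x, f x ∂μ ≤ ∫ x, g x ∂μ :=
  (integral_mono_ae hf integrable_condExp hfg).trans_eq (integral_condExp hm)

theorem saddle_necessity_value_meets_reward_general
    {Ω : Type*} {m0 : MeasurableSpace Ω} (Q : Measure Ω) [IsProbabilityMeasure Q]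
    (ℱ : Filtration ℝ m0) (T : ℝ)
    (Y R : ℝ → Ω → ℝ)
    (hYadp : Adapted ℱ Y) (hRadp : Adapted ℱ R)
    (hYrc : ∀ ω t, ContinuousWithinAt (fun s => Y s ω) (Set.Ici t) t)
    (hRrc : ∀ ω t, ContinuousWithinAt (fun s => R s ω) (Set.Ici t) t)
    (C : ℝ) (hYbdd : ∀ t ω, |Y t ω| ≤ C) (hRbdd : ∀ t ω, |R t ω| ≤ C)
    (hdom : ∀ t ω, Y t ω ≤ R t ω)
    (τstar ϱ : Ω → ℝ)
    (hτstar : IsStoppingTime ℱ (fun ω => (τstar ω : WithTop ℝ))) (hϱ : IsStoppingTime ℱ (fun ω => (ϱ ω : WithTop ℝ)))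
    (hord : ∀ ω, 0 ≤ τstar ω ∧ τstar ω ≤ ϱ ω ∧ ϱ ω ≤ T)
    -- (a) submartingale inequality between `τ*` and `ϱ`:
    (ha : stoppedValue R (fun ω => (τstar ω : WithTop ℝ)) ≤ᵐ[Q] Q[stoppedValue R (fun ω => (ϱ ω : WithTop ℝ))|hτstar.measurableSpace])
    -- (b) equality of reward and value at `ϱ`:
    (hb : stoppedValue R (fun ω => (ϱ ω : WithTop ℝ)) =ᵐ[Q] stoppedValue Y (fun ω => (ϱ ω : WithTop ℝ)))
    -- (c) first saddle inequality: `τ*` is optimal for the stopper against `u*`: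
    (hc : ∀ τ : Ω → ℝ, IsStoppingTime ℱ (fun ω => (τ ω : WithTop ℝ)) → (∀ ω, τ ω ∈ Set.Icc (0:ℝ) T) →
      ∫ ω, stoppedValue Y (fun ω => (τ ω : WithTop ℝ)) ω ∂Q ≤ ∫ ω, stoppedValue Y (fun ω => (τstar ω : WithTop ℝ)) ω ∂Q) :
    stoppedValue Y (fun ω => (τstar ω : WithTop ℝ)) =ᵐ[Q] stoppedValue R (fun ω => (τstar ω : WithTop ℝ)) := by
  have hYτ := integrable_stoppedValue_of_rightContinuous (μ := Q) hYadp hYrc hYbdd hτstar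
  have hRτ := integrable_stoppedValue_of_rightContinuous (μ := Q) hRadp hRrc hRbdd hτstar
  have hϱ_mem : ∀ ω, ϱ ω ∈ Set.Icc (0 : ℝ) T :=
    fun ω => ⟨(hord ω).1.trans (hord ω).2.1, (hord ω).2.2⟩
  have hRτ_le_Yτ : ∫ ω, stoppedValue R (fun ω => (τstar ω : WithTop ℝ)) ω ∂Q
      ≤ ∫ ω, stoppedValue Y (fun ω => (τstar ω : WithTop ℝ)) ω ∂Q :=
    calc _ ≤ ∫ ω, stoppedValue R (fun ω => (ϱ ω : WithTop ℝ)) ω ∂Q :=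
          integral_le_of_ae_le_condExp hτstar.measurableSpace_le hRτ ha
      _ = ∫ ω, stoppedValue Y (fun ω => (ϱ ω : WithTop ℝ)) ω ∂Q := integral_congr_ae hb
      _ ≤ _ := hc ϱ hϱ hϱ_mem
  have hY_le_R : stoppedValue Y (fun ω => (τstar ω : WithTop ℝ))
      ≤ᵐ[Q] stoppedValue R (fun ω => (τstar ω : WithTop ℝ)) := ae_of_all _ fun ω => hdom _ _
  exact (integral_eq_iff_of_ae_le hYτ hRτ hY_le_R).mp
    ((integral_mono_ae hYτ hRτ hY_le_R).antisymm hRτ_le_Yτ)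

/-- Necessity half of the saddle characterization: if `(u*, τ*)` is a saddle
point, then `g(X(τ*)) = V(τ*)` a.s. Here `Y` plays the role of the total reward
process `Y^{u*}` and `R` of `R^{u*} = V + ∫ h^{u*}`, with `R ≥ Y` pathwise;
`ϱ` is the first time after `τ*` that `V` meets `g(X)`, so that
`R(ϱ) = Y(ϱ)` a.s.; hypothesis (a) is the submartingale (optional sampling)
inequality between `τ*` and `ϱ`, and (c) is the first saddle inequality. The
conclusion `Y(τ*) = R(τ*)` a.s. is exactly `g(X(τ*)) = V(τ*)` a.s. -/
theorem saddle_necessity_value_meets_reward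
    {Ω : Type*} {m0 : MeasurableSpace Ω} (Q : Measure Ω) [IsProbabilityMeasure Q]
    (ℱ : Filtration ℝ m0) (T : ℝ) (hT : 0 ≤ T)
    (Y R : ℝ → Ω → ℝ)
    (hYadp : Adapted ℱ Y) (hRadp : Adapted ℱ R)
    (hYrc : ∀ ω t, ContinuousWithinAt (fun s => Y s ω) (Set.Ici t) t)
    (hRrc : ∀ ω t, ContinuousWithinAt (fun s => R s ω) (Set.Ici t) t)
    (C : ℝ) (hYbdd : ∀ t ω, |Y t ω| ≤ C) (hRbdd : ∀ t ω, |R t ω| ≤ C)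
    (hdom : ∀ t ω, Y t ω ≤ R t ω)
    (τstar ϱ : Ω → ℝ)
    (hτstar : IsStoppingTime ℱ (fun ω => (τstar ω : WithTop ℝ))) (hϱ : IsStoppingTime ℱ (fun ω => (ϱ ω : WithTop ℝ)))
    (hord : ∀ ω, 0 ≤ τstar ω ∧ τstar ω ≤ ϱ ω ∧ ϱ ω ≤ T)
    -- (a) submartingale inequality between `τ*` and `ϱ`:
    (ha : stoppedValue R (fun ω => (τstar ω : WithTop ℝ)) ≤ᵐ[Q] Q[stoppedValue R (fun ω => (ϱ ω : WithTop ℝ))|hτstar.measurableSpace])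
    -- (b) equality of reward and value at `ϱ`:
    (hb : stoppedValue R (fun ω => (ϱ ω : WithTop ℝ)) =ᵐ[Q] stoppedValue Y (fun ω => (ϱ ω : WithTop ℝ)))
    -- (c) first saddle inequality: `τ*` is optimal for the stopper against `u*`:
    (hc : ∀ τ : Ω → ℝ, IsStoppingTime ℱ (fun ω => (τ ω : WithTop ℝ)) → (∀ ω, τ ω ∈ Set.Icc (0:ℝ) T) →
      ∫ ω, stoppedValue Y (fun ω => (τ ω : WithTop ℝ)) ω ∂Q ≤ ∫ ω, stoppedValue Y (fun ω => (τstar ω : WithTop ℝ)) ω ∂Q) :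
    stoppedValue Y (fun ω => (τstar ω : WithTop ℝ)) =ᵐ[Q] stoppedValue R (fun ω => (τstar ω : WithTop ℝ)) :=
  saddle_necessity_value_meets_reward_general Q ℱ T Y R hYadp hRadp hYrc hRrc C hYbdd hRbdd hdom
    τstar ϱ hτstar hϱ hord ha hb hc
end

section
/- (Gluing inequality for stopping times.) Let Y be a bounded right-continuous adapted process and τ* a stopping time such that: (i) for every stopping time ρ ≤ τ*, Y_ρ ≤ E[Y_{τ*} | F_ρ] a.s.; and (ii) for every stopping time ν ≥ τ*, E[Y_ν | F_{τ*}] ≤ Y_{τ*} a.s. Then for every stopping time τ (not necessarily comparable with τ*), E[Y_τ] ≤ E[Y_{τ*}]. -/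
open MeasureTheory Filter Topology TopologicalSpace

/-!
Split `Ω` along `A = {τ ≤ τ*}`, an event of both `F_{τ ∧ τ*}` and `F_{τ*}`. On `A` we have
`Y_τ = Y_{τ ∧ τ*}`, and (i) with the defining property of `E[· | F_{τ ∧ τ*}]` gives
`∫_A Y_τ ≤ ∫_A Y_{τ*}`; on `Aᶜ` we have `Y_τ = Y_{τ ∨ τ*}`, and (ii) gives
`∫_{Aᶜ} Y_τ ≤ ∫_{Aᶜ} Y_{τ*}`. Integrability of the stopped values comes from boundedness and
right-continuity: `Y_σ` is the pointwise limit of `Y` evaluated at the countably-valued times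
`⌈σ (n + 1)⌉ / (n + 1) ↓ σ`.
-/

lemma measurable_comp_of_countable_range {Ω ι β : Type*} {mΩ : MeasurableSpace Ω}
    [MeasurableSpace ι] [MeasurableSingletonClass ι] [MeasurableSpace β]
    {Y : ι → Ω → β} (hY : ∀ t, Measurable (Y t)) {f : Ω → ι}
    (hf : Measurable f) (hf_range : (Set.range f).Countable) :
    Measurable fun ω => Y (f ω) ω := by
  have := hf_range.to_subtype
  have hY' : Measurable fun p : Ω × Set.range f => Y p.2 p.1 :=
    measurable_from_prod_countable_left fun t => hY t
  exact hY'.comp (measurable_id.prodMk (hf.subtype_mk (h := Set.mem_range_self)))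

noncomputable def ceilGrid (n : ℕ) (x : ℝ) : ℝ := ⌈x * (n + 1)⌉ / (n + 1)

lemma le_ceilGrid (n : ℕ) (x : ℝ) : x ≤ ceilGrid n x := by
  rw [ceilGrid, le_div_iff₀ (by positivity)]
  exact Int.le_ceil _

lemma ceilGrid_le (n : ℕ) (x : ℝ) : ceilGrid n x ≤ x + 1 / (n + 1) := by
  rw [ceilGrid, div_le_iff₀ (by positivity), add_mul, one_div_mul_cancel (by positivity)]
  exact (Int.ceil_lt_add_one _).le

lemma tendsto_ceilGrid (x : ℝ) :
    Tendsto (fun n => ceilGrid n x) atTop (𝓝[≥] x) := by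
  refine tendsto_nhdsWithin_of_tendsto_nhds_of_eventually_within _ ?_
    (.of_forall fun n => le_ceilGrid n x)
  refine tendsto_of_tendsto_of_tendsto_of_le_of_le tendsto_const_nhds ?_
    (le_ceilGrid · x) (ceilGrid_le · x)
  simpa using tendsto_const_nhds.add (tendsto_one_div_add_atTop_nhds_zero_nat (𝕜 := ℝ))

lemma measurable_ceilGrid (n : ℕ) : Measurable (ceilGrid n) :=
  (measurable_from_top.comp (measurable_id.mul_const _).ceil).div_const _

lemma countable_range_ceilGrid (n : ℕ) : (Set.range (ceilGrid n)).Countable :=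
  (Set.countable_range fun z : ℤ => (z : ℝ) / (n + 1)).mono <| by
    rintro _ ⟨x, rfl⟩
    exact ⟨_, rfl⟩

lemma measurable_comp_of_continuousWithinAt_Ici {Ω β : Type*} {mΩ : MeasurableSpace Ω}
    [TopologicalSpace β] [MeasurableSpace β] [BorelSpace β] [PseudoMetrizableSpace β]
    {Y : ℝ → Ω → β} (hY : ∀ t, Measurable (Y t))
    (hY_rc : ∀ ω t, ContinuousWithinAt (fun s => Y s ω) (Set.Ici t) t)
    {σ : Ω → ℝ} (hσ : Measurable σ) :
    Measurable fun ω => Y (σ ω) ω := by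
  refine measurable_of_tendsto_metrizable' (f := fun n ω => Y (ceilGrid n (σ ω)) ω) atTop
    (fun n => measurable_comp_of_countable_range hY ((measurable_ceilGrid n).comp hσ)
      ((countable_range_ceilGrid n).mono (Set.range_comp_subset_range σ (ceilGrid n)))) ?_
  exact tendsto_pi_nhds.2 fun ω => (hY_rc ω (σ ω)).tendsto.comp (tendsto_ceilGrid (σ ω))

lemma integrable_comp_of_continuousWithinAt_Ici {Ω E : Type*} {mΩ : MeasurableSpace Ω}
    {μ : Measure Ω} [IsFiniteMeasure μ] [NormedAddCommGroup E] [MeasurableSpace E] [BorelSpace E]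
    [SecondCountableTopology E] {Y : ℝ → Ω → E} (hY : ∀ t, Measurable (Y t))
    (hY_rc : ∀ ω t, ContinuousWithinAt (fun s => Y s ω) (Set.Ici t) t)
    {C : ℝ} (hY_bdd : ∀ t ω, ‖Y t ω‖ ≤ C) {σ : Ω → ℝ} (hσ : Measurable σ) :
    Integrable (fun ω => Y (σ ω) ω) μ :=
  .of_bound (measurable_comp_of_continuousWithinAt_Ici hY hY_rc hσ).aestronglyMeasurable C
    (.of_forall fun ω => hY_bdd (σ ω) ω)

section CondExp

variable {Ω : Type*} {m m₀ : MeasurableSpace Ω} {μ : Measure Ω} [IsFiniteMeasure μ]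
  {f g : Ω → ℝ} {s : Set Ω}

lemma setIntegral_le_of_ae_le_condExp (hm : m ≤ m₀) (hf : Integrable f μ) (hg : Integrable g μ)
    (hfg : f ≤ᵐ[μ] μ[g|m]) (hs : MeasurableSet[m] s) :
    ∫ ω in s, f ω ∂μ ≤ ∫ ω in s, g ω ∂μ :=
  calc ∫ ω in s, f ω ∂μ ≤ ∫ ω in s, (μ[g|m]) ω ∂μ :=
        setIntegral_mono_ae_restrict hf.integrableOn integrable_condExp.integrableOn
          (ae_restrict_of_ae hfg)
    _ = ∫ ω in s, g ω ∂μ := setIntegral_condExp hm hg hs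

lemma setIntegral_le_of_condExp_ae_le (hm : m ≤ m₀) (hf : Integrable f μ) (hg : Integrable g μ)
    (hfg : μ[f|m] ≤ᵐ[μ] g) (hs : MeasurableSet[m] s) :
    ∫ ω in s, f ω ∂μ ≤ ∫ ω in s, g ω ∂μ :=
  calc ∫ ω in s, f ω ∂μ = ∫ ω in s, (μ[f|m]) ω ∂μ := (setIntegral_condExp hm hf hs).symm
    _ ≤ ∫ ω in s, g ω ∂μ :=
        setIntegral_mono_ae_restrict integrable_condExp.integrableOn hg.integrableOn
          (ae_restrict_of_ae hfg)

end CondExp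

theorem gluing_inequality_for_stopping_times_general
    {Ω : Type*} {m0 : MeasurableSpace Ω} (P : Measure Ω) [IsProbabilityMeasure P]
    (ℱ : Filtration ℝ m0) (T : ℝ)
    (Y : ℝ → Ω → ℝ)
    (hYadp : Adapted ℱ Y)
    (hYrc : ∀ ω t, ContinuousWithinAt (fun s => Y s ω) (Set.Ici t) t)
    (C : ℝ) (hYbdd : ∀ t ω, |Y t ω| ≤ C)
    (τstar : Ω → ℝ) (hτstar : IsStoppingTime ℱ (fun ω => (τstar ω : WithTop ℝ)))
    (hτstarT : ∀ ω, τstar ω ∈ Set.Icc (0:ℝ) T)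
    (hbefore : ∀ ρ : Ω → ℝ, (hρ : IsStoppingTime ℱ (fun ω => (ρ ω : WithTop ℝ))) → (∀ ω, 0 ≤ ρ ω ∧ ρ ω ≤ τstar ω) →
      stoppedValue Y (fun ω => (ρ ω : WithTop ℝ)) ≤ᵐ[P] P[stoppedValue Y (fun ω => (τstar ω : WithTop ℝ))|hρ.measurableSpace])
    (hafter : ∀ ν : Ω → ℝ, IsStoppingTime ℱ (fun ω => (ν ω : WithTop ℝ)) → (∀ ω, τstar ω ≤ ν ω ∧ ν ω ≤ T) →
      P[stoppedValue Y (fun ω => (ν ω : WithTop ℝ))|hτstar.measurableSpace] ≤ᵐ[P] stoppedValue Y (fun ω => (τstar ω : WithTop ℝ))) :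
    ∀ τ : Ω → ℝ, IsStoppingTime ℱ (fun ω => (τ ω : WithTop ℝ)) → (∀ ω, τ ω ∈ Set.Icc (0:ℝ) T) →
      ∫ ω, stoppedValue Y (fun ω => (τ ω : WithTop ℝ)) ω ∂P ≤ ∫ ω, stoppedValue Y (fun ω => (τstar ω : WithTop ℝ)) ω ∂P := by
  intro τ hτ hτT
  have hY_int : ∀ σ : Ω → ℝ, IsStoppingTime ℱ (fun ω => (σ ω : WithTop ℝ)) →
      Integrable (stoppedValue Y fun ω => (σ ω : WithTop ℝ)) P := fun σ hσ =>
    integrable_comp_of_continuousWithinAt_Ici (fun t => (hYadp t).mono (ℱ.le t) le_rfl) hYrc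
      (fun t ω => (Real.norm_eq_abs _).trans_le (hYbdd t ω)) hσ.measurable'.untopA
  let ρ : Ω → ℝ := fun ω => min (τ ω) (τstar ω)
  let ν : Ω → ℝ := fun ω => max (τ ω) (τstar ω)
  have hρ : IsStoppingTime ℱ (fun ω => (ρ ω : WithTop ℝ)) := hτ.min hτstar
  have hν : IsStoppingTime ℱ (fun ω => (ν ω : WithTop ℝ)) := hτ.max hτstar
  set A := {ω | τ ω ≤ τstar ω}
  have hA_ρ : MeasurableSet[hρ.measurableSpace] A := by
    simpa only [WithTop.coe_le_coe] using hτ.measurableSet_stopping_time_le_min hτstar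
  have hA_star : MeasurableSet[hτstar.measurableSpace] A := by
    simpa only [WithTop.coe_le_coe] using hτ.measurableSet_stopping_time_le hτstar
  have hA : MeasurableSet A := hρ.measurableSpace_le A hA_ρ
  have h_on_A : ∫ ω in A, stoppedValue Y (fun ω => (τ ω : WithTop ℝ)) ω ∂P ≤
      ∫ ω in A, stoppedValue Y (fun ω => (τstar ω : WithTop ℝ)) ω ∂P := by
    refine (setIntegral_congr_fun hA fun ω (hω : τ ω ≤ τstar ω) => ?_).trans_le
      (setIntegral_le_of_ae_le_condExp hρ.measurableSpace_le (hY_int ρ hρ) (hY_int _ hτstar)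
        (hbefore ρ hρ fun ω => ⟨le_min (hτT ω).1 (hτstarT ω).1, min_le_right _ _⟩) hA_ρ)
    exact congrArg (Y · ω) (min_eq_left hω).symm
  have h_on_Ac : ∫ ω in Aᶜ, stoppedValue Y (fun ω => (τ ω : WithTop ℝ)) ω ∂P ≤
      ∫ ω in Aᶜ, stoppedValue Y (fun ω => (τstar ω : WithTop ℝ)) ω ∂P := by
    refine (setIntegral_congr_fun hA.compl fun ω (hω : ¬τ ω ≤ τstar ω) => ?_).trans_le
      (setIntegral_le_of_condExp_ae_le hτstar.measurableSpace_le (hY_int ν hν) (hY_int _ hτstar)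
        (hafter ν hν fun ω => ⟨le_max_right _ _, max_le (hτT ω).2 (hτstarT ω).2⟩) hA_star.compl)
    exact congrArg (Y · ω) (max_eq_left (not_le.1 hω).le).symm
  rw [← integral_add_compl hA (hY_int τ hτ), ← integral_add_compl hA (hY_int τstar hτstar)]
  exact add_le_add h_on_A h_on_Ac

/-- Gluing inequality for stopping times: if `Y_ρ ≤ E[Y_{τ*} | F_ρ]` a.s. for
every stopping time `ρ ≤ τ*`, and `E[Y_ν | F_{τ*}] ≤ Y_{τ*}` a.s. for every
stopping time `ν ≥ τ*`, then `E[Y_τ] ≤ E[Y_{τ*}]` for every stopping time `τ`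
(not necessarily comparable with `τ*`). -/
theorem gluing_inequality_for_stopping_times
    {Ω : Type*} {m0 : MeasurableSpace Ω} (P : Measure Ω) [IsProbabilityMeasure P]
    (ℱ : Filtration ℝ m0) (T : ℝ) (hT : 0 ≤ T)
    (Y : ℝ → Ω → ℝ)
    (hYadp : Adapted ℱ Y)
    (hYrc : ∀ ω t, ContinuousWithinAt (fun s => Y s ω) (Set.Ici t) t)
    (C : ℝ) (hYbdd : ∀ t ω, |Y t ω| ≤ C)
    (τstar : Ω → ℝ) (hτstar : IsStoppingTime ℱ (fun ω => (τstar ω : WithTop ℝ)))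
    (hτstarT : ∀ ω, τstar ω ∈ Set.Icc (0:ℝ) T)
    (hbefore : ∀ ρ : Ω → ℝ, (hρ : IsStoppingTime ℱ (fun ω => (ρ ω : WithTop ℝ))) → (∀ ω, 0 ≤ ρ ω ∧ ρ ω ≤ τstar ω) →
      stoppedValue Y (fun ω => (ρ ω : WithTop ℝ)) ≤ᵐ[P] P[stoppedValue Y (fun ω => (τstar ω : WithTop ℝ))|hρ.measurableSpace])
    (hafter : ∀ ν : Ω → ℝ, IsStoppingTime ℱ (fun ω => (ν ω : WithTop ℝ)) → (∀ ω, τstar ω ≤ ν ω ∧ ν ω ≤ T) →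
      P[stoppedValue Y (fun ω => (ν ω : WithTop ℝ))|hτstar.measurableSpace] ≤ᵐ[P] stoppedValue Y (fun ω => (τstar ω : WithTop ℝ))) :
    ∀ τ : Ω → ℝ, IsStoppingTime ℱ (fun ω => (τ ω : WithTop ℝ)) → (∀ ω, τ ω ∈ Set.Icc (0:ℝ) T) →
      ∫ ω, stoppedValue Y (fun ω => (τ ω : WithTop ℝ)) ω ∂P ≤ ∫ ω, stoppedValue Y (fun ω => (τstar ω : WithTop ℝ)) ω ∂P :=
  gluing_inequality_for_stopping_times_general P ℱ T Y hYadp hYrc C hYbdd τstar hτstar hτstarT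
    hbefore hafter
end
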